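/- arXiv:1804.03241 — 3 statements merged into one kernel-verified Lean document; each statement's English description precedes it below -/
import Mathlib

section
/- A simplicial set morphism f : X → Y is a weak homotopy equivalence if and only if f^op : X^op → Y^op is a weak homotopy equivalence, where (−)^op is the involution of simplicial sets induced by the unique nontrivial automorphism of the simplex category Δ. -/
open CategoryTheory Opposite

namespace ThmA

/-! ### Weak homotopy equivalences of simplicial sets -/

/-- A map of topological spaces is a homotopy equivalence. -/
def TopIsHEquiv {X Y : TopCat} (f : X ⟶ Y) : Prop :=
  ∃ g : Y ⟶ X, ContinuousMap.Homotopic (f ≫ g).hom (𝟙 X : X ⟶ X).hom ∧ ContinuousMap.Homotopic (g ≫ f).hom (𝟙 Y : Y ⟶ Y).hom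

/-- A morphism of simplicial sets is a weak homotopy equivalence if its topological
realization is a homotopy equivalence. -/
noncomputable def IsWeakEquiv {X Y : SSet} (f : X ⟶ Y) : Prop := TopIsHEquiv (SSet.toTop.map f)

/-- The terminal simplicial set (a constant presheaf with point value). -/
def sTerminal : SSet := (Functor.const _).obj PUnit

def toTerminal (X : SSet) : X ⟶ sTerminal where
  app _ := TypeCat.ofHom fun _ => PUnit.unit
  naturality _ _ _ := rfl

/-- A simplicial set is weakly contractible if the map to the terminal simplicial set is a
weak homotopy equivalence. -/
noncomputable def IsWeaklyContractible (X : SSet) : Prop := IsWeakEquiv (toTerminal X)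

/-! ### The involution of `Δ` and opposite simplicial sets -/

/-- The unique nontrivial automorphism of the simplex category: the identity on objects,
sending `f : [m] ⟶ [n]` to `i ↦ n - f(m - i)`. -/
def Dfun : SimplexCategory ⥤ SimplexCategory where
  obj x := x
  map {x y} f := SimplexCategory.Hom.mk
    ⟨fun i => (f.toOrderHom i.rev).rev, by
      intro i j hij
      exact Fin.rev_le_rev.mpr (f.toOrderHom.monotone (Fin.rev_le_rev.mpr hij))⟩
  map_id x := by
    apply SimplexCategory.Hom.ext
    apply OrderHom.ext
    funext i
    show ((SimplexCategory.Hom.toOrderHom (𝟙 x)) i.rev).rev = _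
    simp [Fin.rev_rev]
  map_comp {x y z} f g := by
    apply SimplexCategory.Hom.ext
    apply OrderHom.ext
    funext i
    show ((f ≫ g).toOrderHom i.rev).rev = _
    rw [SimplexCategory.comp_toOrderHom]
    show (g.toOrderHom (f.toOrderHom i.rev)).rev
        = (g.toOrderHom ((f.toOrderHom i.rev).rev).rev).rev
    rw [Fin.rev_rev]

/-- The opposite simplicial set `X^op = X ∘ D`. -/
def opSSet (X : SSet) : SSet := Dfun.op ⋙ X

/-- The opposite of a morphism of simplicial sets. -/
def opSSetMap {X Y : SSet} (f : X ⟶ Y) : opSSet X ⟶ opSSet Y := Functor.whiskerLeft _ f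

/-! Reversing barycentric coordinates, `(t₀, …, tₙ) ↦ (tₙ, …, t₀)`, is a homeomorphism of the
topological `n`-simplex that intertwines each simplicial operator `θ` with `D θ`, i.e. a natural
isomorphism `D ⋙ |Δ[-]| ≅ |Δ[-]|`. Hence the singular complex satisfies `(Sing Y)^op ≅ Sing Y`
naturally. As `(-)^op` is a self-inverse equivalence of `SSet`, the functors `X ↦ |X^op|` and
`X ↦ |X|` are both left adjoint to `Sing`, so `|X^op| ≅ |X|` naturally in `X`. Thus `|f^op|` and
`|f|` are isomorphic arrows of `TopCat`, and being a homotopy equivalence is invariant under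
isomorphism of arrows. -/

open SimplexCategory ContinuousMap

theorem dfun_map_dfun_map {x y : SimplexCategory} (f : x ⟶ y) : Dfun.map (Dfun.map f) = f := by
  ext i : 3
  exact (Fin.rev_rev _).trans (congrArg f.toOrderHom i.rev_rev)

def dfunCompDfunIso : Dfun ⋙ Dfun ≅ 𝟭 SimplexCategory :=
  NatIso.ofComponents (fun _ => Iso.refl _) fun f => by
    simp only [Functor.comp_map, dfun_map_dfun_map]
    rfl

def dfunEquivalence : SimplexCategory ≌ SimplexCategory where
  functor := Dfun
  inverse := Dfun
  unitIso := dfunCompDfunIso.symm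
  counitIso := dfunCompDfunIso
  functor_unitIso_comp X := (Category.comp_id _).trans (Dfun.map_id X)

/-- Its functor is `X ↦ opSSet X`, `f ↦ opSSetMap f` on the nose. -/
def opSSetEquivalence : SSet ≌ SSet := dfunEquivalence.op.congrLeft

theorem stdSimplex.map_map_of_involutive {S X : Type*} [Semiring S] [PartialOrder S]
    [IsOrderedRing S] [Fintype X] {σ : X → X} (hσ : Function.Involutive σ)
    (s : stdSimplex S X) : stdSimplex.map σ (stdSimplex.map σ s) = s := by
  rw [stdSimplex.map_comp_apply, hσ.comp_self, stdSimplex.map_id_apply]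

noncomputable def stdSimplexRevIso (n : SimplexCategory) : toTop₀.obj n ≅ toTop₀.obj n where
  hom := TopCat.ofHom ⟨stdSimplex.map Fin.rev, stdSimplex.continuous_map _⟩
  inv := TopCat.ofHom ⟨stdSimplex.map Fin.rev, stdSimplex.continuous_map _⟩
  hom_inv_id := by
    ext s : 1
    exact stdSimplex.map_map_of_involutive Fin.rev_involutive s
  inv_hom_id := by
    ext s : 1
    exact stdSimplex.map_map_of_involutive Fin.rev_involutive s

noncomputable def dfunCompToTop₀Iso : Dfun ⋙ toTop₀ ≅ toTop₀ :=
  NatIso.ofComponents stdSimplexRevIso fun f => by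
    have rev_comp : Fin.rev ∘ (Dfun.map f).toOrderHom = f.toOrderHom ∘ Fin.rev := by
      funext i
      exact Fin.rev_rev _
    ext s : 1
    exact (stdSimplex.map_comp_apply _ _ s).trans
      ((congrArg (stdSimplex.map · s) rev_comp).trans (stdSimplex.map_comp_apply _ _ s).symm)

noncomputable def dfunCompToTopIso : Dfun ⋙ toTop ≅ toTop :=
  Functor.isoWhiskerRight dfunCompToTop₀Iso TopCat.uliftFunctor

noncomputable def toSSetCompOpSSetIso :
    TopCat.toSSet ⋙ opSSetEquivalence.functor ≅ TopCat.toSSet :=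
  Functor.isoWhiskerLeft uliftYoneda
    ((Functor.whiskeringLeft _ _ _).mapIso (NatIso.op dfunCompToTopIso)).symm

noncomputable def opSSetCompToTopIso : opSSetEquivalence.functor ⋙ SSet.toTop ≅ SSet.toTop :=
  ((opSSetEquivalence.symm.toAdjunction.comp sSetTopAdj).ofNatIsoRight
    toSSetCompOpSSetIso).leftAdjointUniq sSetTopAdj

theorem topIsHEquiv_iff {X Y : TopCat} (f : X ⟶ Y) :
    TopIsHEquiv f ↔ ∃ e : X ≃ₕ Y, TopCat.ofHom e.toFun = f := by
  constructor
  · rintro ⟨g, hfg, hgf⟩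
    exact ⟨⟨f.hom, g.hom, hfg, hgf⟩, rfl⟩
  · rintro ⟨e, rfl⟩
    exact ⟨TopCat.ofHom e.invFun, e.left_inv, e.right_inv⟩

def homotopyEquivalences : MorphismProperty TopCat := fun _ _ f => TopIsHEquiv f

instance : homotopyEquivalences.IsStableUnderComposition where
  comp_mem f g hf hg := by
    obtain ⟨e₁, rfl⟩ := (topIsHEquiv_iff f).1 hf
    obtain ⟨e₂, rfl⟩ := (topIsHEquiv_iff g).1 hg
    exact (topIsHEquiv_iff _).2 ⟨e₁.trans e₂, rfl⟩

theorem isomorphisms_le_homotopyEquivalences :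
    MorphismProperty.isomorphisms TopCat ≤ homotopyEquivalences := fun _ _ f _ =>
  (topIsHEquiv_iff f).2 ⟨(TopCat.homeoOfIso (asIso f)).toHomotopyEquiv, rfl⟩

instance : homotopyEquivalences.RespectsIso :=
  MorphismProperty.respectsIso_of_isStableUnderComposition isomorphisms_le_homotopyEquivalences

/-- a morphism of simplicial sets is a weak homotopy equivalence if and only if
its opposite is. -/
theorem isWeakEquiv_op_iff {X Y : SSet} (f : X ⟶ Y) :
    IsWeakEquiv f ↔ IsWeakEquiv (opSSetMap f) :=
  (homotopyEquivalences.arrow_mk_iso_iff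
    (Arrow.isoOfNatIso opSSetCompToTopIso (Arrow.mk f))).symm

end ThmA
end

section
/- Let (C, ⋆, ∅) be a monoidal category whose unit ∅ is an initial object and which is locally left closed. For every object Z of C, the assignment (T, z : T → Z) ↦ Z/z extends to a functor from the opposite of the over-category C/Z to C; moreover, applying this functor to the morphism ∅ → X over Z (for any g : X → Z) and using the canonical isomorphism Z/(∅ → Z) ≅ Z yields a 'forgetful' morphism U : Z/g → Z, and the slice functor lifts along the forgetful functor to a functor (C/Z)^op → C/Z. -/
/-!
The map `l* : Z/z₂ ⟶ Z/z₁` is the adjoint transpose of `T₁ ⋆ Z/z₂ ⟶ T₂ ⋆ Z/z₂ ⟶ Z`.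
Since a morphism into `Z/z` is determined by its composite with the evaluation
`T ⋆ Z/z ⟶ Z`, functoriality reduces to the interchange law for `⋆`, and compatibility
with `U` holds because `U` is itself the evaluation precomposed with `∅ ⟶ T`, which any
`l` preserves as `∅` is initial.
-/

open CategoryTheory MonoidalCategory Limits

universe v u

noncomputable section

namespace MonA

variable {C : Type u} [Category.{v} C] [MonoidalCategory C]

/-- When the monoidal unit is an initial object `∅`, the canonical morphism
`ι₁ : X ⟶ X ⋆ Y` (with `⋆` the monoidal product). -/
def iota1 (hI : IsInitial (𝟙_ C)) (X Y : C) : X ⟶ X ⊗ Y :=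
  (ρ_ X).inv ≫ (X ◁ hI.to Y)

theorem iota1_natural (hI : IsInitial (𝟙_ C)) {X X' : C} (f : X ⟶ X') (Y : C) :
    iota1 hI X Y ≫ (f ▷ Y) = f ≫ iota1 hI X' Y := by
  dsimp [iota1]
  rw [Category.assoc, whisker_exchange, ← Category.assoc, ← rightUnitor_inv_naturality,
    Category.assoc]

/-- The functor `Y ↦ (X ⋆ Y, ι₁)` from `C` to the under-category `X/C`. -/
def underJoin (hI : IsInitial (𝟙_ C)) (T : C) : C ⥤ Under T where
  obj Y := Under.mk (iota1 hI T Y)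
  map {Y Y'} f := Under.homMk (T ◁ f) (by
    dsimp [iota1]
    rw [Category.assoc, ← MonoidalCategory.whiskerLeft_comp]
    congr 2
    exact hI.hom_ext _ _)

section
variable (hI : IsInitial (𝟙_ C)) (slice : ∀ T : C, Under T ⥤ C)
  (adj : ∀ T : C, underJoin hI T ⊣ slice T)

/-- The evaluation (counit) map `T ⋆ (Z/g) ⟶ Z` of the slice adjunction, for an object
`(T, g : T ⟶ Z)` of `C/Z`. -/
def epsMap {Z : C} (w : Over Z) :
    w.left ⊗ (slice w.left).obj (Under.mk w.hom) ⟶ Z :=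
  ((adj w.left).counit.app (Under.mk w.hom)).right

/-- The forgetful morphism `U : Z/g ⟶ Z`, obtained by applying the slice functor to
`∅ ⟶ T` over `Z` and using the canonical isomorphism `Z/(∅ → Z) ≅ Z`. -/
def forgetU {Z : C} (w : Over Z) : (slice w.left).obj (Under.mk w.hom) ⟶ Z :=
  (λ_ _).inv ≫ (hI.to w.left ▷ _) ≫ epsMap hI slice adj w

theorem iota1_comp_epsMap {Z : C} (w : Over Z) :
    iota1 hI w.left ((slice w.left).obj (Under.mk w.hom)) ≫ epsMap hI slice adj w = w.hom :=
  Under.w ((adj w.left).counit.app (Under.mk w.hom))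

theorem slice_hom_ext {Z : C} (w : Over Z) {S : C}
    {f g : S ⟶ (slice w.left).obj (Under.mk w.hom)}
    (h : (w.left ◁ f) ≫ epsMap hI slice adj w = (w.left ◁ g) ≫ epsMap hI slice adj w) :
    f = g := by
  apply ((adj w.left).homEquiv _ _).symm.injective
  rw [Adjunction.homEquiv_counit, Adjunction.homEquiv_counit]
  ext
  exact h

/-- `l ⋆ Z/z₂` followed by evaluation, as a morphism `(T₁ ⋆ Z/z₂, ι₁) ⟶ (Z, z₁)` of `T₁/C`. -/
def whiskerEpsMap {Z : C} {w₁ w₂ : Over Z} (l : w₁ ⟶ w₂) :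
    (underJoin hI w₁.left).obj ((slice w₂.left).obj (Under.mk w₂.hom)) ⟶ Under.mk w₁.hom :=
  Under.homMk ((l.left ▷ _) ≫ epsMap hI slice adj w₂) (by
    dsimp only [underJoin, Under.mk_hom]
    rw [← Category.assoc, iota1_natural, Category.assoc, iota1_comp_epsMap, Over.w])

/-- The induced map `l* : Z/z₂ ⟶ Z/z₁`. -/
def sliceMap {Z : C} {w₁ w₂ : Over Z} (l : w₁ ⟶ w₂) :
    (slice w₂.left).obj (Under.mk w₂.hom) ⟶ (slice w₁.left).obj (Under.mk w₁.hom) :=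
  (adj w₁.left).homEquiv _ _ (whiskerEpsMap hI slice adj l)

theorem whiskerLeft_sliceMap_comp_epsMap {Z : C} {w₁ w₂ : Over Z} (l : w₁ ⟶ w₂) :
    (w₁.left ◁ sliceMap hI slice adj l) ≫ epsMap hI slice adj w₁
      = (l.left ▷ _) ≫ epsMap hI slice adj w₂ := by
  have h := congrArg CommaMorphism.right
    (((adj w₁.left).homEquiv _ _).symm_apply_apply (whiskerEpsMap hI slice adj l))
  rw [Adjunction.homEquiv_counit] at h
  exact h

theorem sliceMap_id {Z : C} (w : Over Z) : sliceMap hI slice adj (𝟙 w) = 𝟙 _ :=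
  slice_hom_ext hI slice adj w (by simp [whiskerLeft_sliceMap_comp_epsMap])

theorem sliceMap_comp {Z : C} {w₁ w₂ w₃ : Over Z} (l : w₁ ⟶ w₂) (m : w₂ ⟶ w₃) :
    sliceMap hI slice adj (l ≫ m) = sliceMap hI slice adj m ≫ sliceMap hI slice adj l := by
  apply slice_hom_ext hI slice adj w₁
  rw [whiskerLeft_sliceMap_comp_epsMap, MonoidalCategory.whiskerLeft_comp, Category.assoc,
    whiskerLeft_sliceMap_comp_epsMap, ← Category.assoc, whisker_exchange, Category.assoc,
    whiskerLeft_sliceMap_comp_epsMap, ← Category.assoc, ← comp_whiskerRight]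
  rfl

theorem sliceMap_comp_forgetU {Z : C} {w₁ w₂ : Over Z} (l : w₁ ⟶ w₂) :
    sliceMap hI slice adj l ≫ forgetU hI slice adj w₁ = forgetU hI slice adj w₂ := by
  dsimp only [forgetU]
  rw [← Category.assoc, leftUnitor_inv_naturality, Category.assoc,
    ← Category.assoc (𝟙_ C ◁ _), whisker_exchange, Category.assoc,
    whiskerLeft_sliceMap_comp_epsMap, ← Category.assoc (hI.to w₁.left ▷ _),
    ← comp_whiskerRight, hI.hom_ext (hI.to w₁.left ≫ l.left) (hI.to w₂.left)]

def sliceFunctor (Z : C) : (Over Z)ᵒᵖ ⥤ C where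
  obj w := (slice w.unop.left).obj (Under.mk w.unop.hom)
  map l := sliceMap hI slice adj l.unop
  map_id w := sliceMap_id hI slice adj w.unop
  map_comp l m := sliceMap_comp hI slice adj m.unop l.unop

def sliceOverFunctor (Z : C) : (Over Z)ᵒᵖ ⥤ Over Z where
  obj w := Over.mk (forgetU hI slice adj w.unop)
  map l := Over.homMk (sliceMap hI slice adj l.unop) (sliceMap_comp_forgetU hI slice adj l.unop)
  map_id w := by ext; exact sliceMap_id hI slice adj w.unop
  map_comp l m := by ext; exact sliceMap_comp hI slice adj m.unop l.unop

theorem sliceOverFunctor_comp_forget (Z : C) :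
    sliceOverFunctor hI slice adj Z ⋙ Over.forget Z = sliceFunctor hI slice adj Z :=
  rfl

/-- let `(C, ⋆, ∅)` be a monoidal category whose unit `∅` is initial, locally
left closed (the local closedness being given by the functors `slice T : T/C ⥤ C` right
adjoint to `Y ↦ (T ⋆ Y, ι₁)`).  For every object `Z`, the assignment
`(T, z : T ⟶ Z) ↦ Z/z := (slice T).obj (T, z)` extends to a functor `F : (C/Z)ᵒᵖ ⥤ C` — whose
action on morphisms is the one determined by the adjunctions, i.e. characterized by the mate
equation below — and this functor lifts along the forgetful functor, via the forgetful
morphisms `U : Z/z ⟶ Z`, to a functor `(C/Z)ᵒᵖ ⥤ C/Z`. -/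
theorem slice_functor_exists (Z : C) :
    ∃ (F : (Over Z)ᵒᵖ ⥤ C)
      (hobj : ∀ w : Over Z, F.obj (Opposite.op w) = (slice w.left).obj (Under.mk w.hom)),
      (∀ {w₁ w₂ : Over Z} (l : w₁ ⟶ w₂),
        (w₁.left ◁ (eqToHom (hobj w₂).symm ≫ F.map l.op ≫ eqToHom (hobj w₁)))
            ≫ epsMap hI slice adj w₁
          = (l.left ▷ ((slice w₂.left).obj (Under.mk w₂.hom))) ≫ epsMap hI slice adj w₂) ∧
      ∃ (F' : (Over Z)ᵒᵖ ⥤ Over Z) (hcomm : F' ⋙ Over.forget Z = F),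
        ∀ w : Over Z, (F'.obj (Opposite.op w)).hom
          = eqToHom ((Functor.congr_obj hcomm (Opposite.op w)).trans (hobj w))
            ≫ forgetU hI slice adj w := by
  refine ⟨sliceFunctor hI slice adj Z, fun _ => rfl, @fun w₁ w₂ l => ?_,
    sliceOverFunctor hI slice adj Z, sliceOverFunctor_comp_forget hI slice adj Z, fun w => ?_⟩
  · change (w₁.left ◁ (𝟙 _ ≫ sliceMap hI slice adj l ≫ 𝟙 _)) ≫ _ = _
    simpa only [Category.id_comp, Category.comp_id] using
      whiskerLeft_sliceMap_comp_epsMap hI slice adj l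
  · exact (Category.id_comp _).symm

end

end MonA

end
end

section
/- For the category of small categories Cat with the categorical join ⋆, the induced slice functoriality for vertices is an isomorphism: for any functor v : A → C and any m-simplex c of the nerve of C (a chain c₀ → c₁ → ⋯ → c_m in C), the induced functor c\A → c_m\A (restriction along the inclusion of the last vertex [0] → [m]) is an isomorphism of categories. -/
/-
A cocone over the chain `c₀ → ⋯ → c_m` with vertex `v a` is determined by its last leg, the
`i`-th leg being `c_i → c_m` followed by it; so extending an arrow `c_m → v a` along the chain
inverts the restriction. Both composites fix the underlying objects and morphisms of `A`, hence
are identities, the forgetful functor to `A` being faithful.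
-/

open CategoryTheory

universe v u

namespace SliceA

variable {A : Type u} [Category.{v} A] {C : Type u} [Category.{v} C]

/-- The slice `c\A` of a functor `v : A ⥤ C` under an `m`-simplex `c` of the nerve of `C`
(a chain `c₀ → ⋯ → c_m`), as given by the join adjunction: objects are objects `a` of `A`
together with a compatible extension of the chain `c` by `v(a)`, i.e. a cocone of `c` with
vertex `v(a)`. -/
structure ChainSlice (v : A ⥤ C) {m : ℕ} (c : ComposableArrows C m) where
  pt : A
  arr : ∀ i : Fin (m + 1), c.obj i ⟶ v.obj pt
  comm : ∀ (i j : Fin (m + 1)) (hij : i ≤ j), c.map (homOfLE hij) ≫ arr j = arr i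

/-- Morphisms in the slice `c\A`. -/
@[ext]
structure ChainSliceHom {v : A ⥤ C} {m : ℕ} {c : ComposableArrows C m}
    (x y : ChainSlice v c) where
  hom : x.pt ⟶ y.pt
  w : ∀ i : Fin (m + 1), x.arr i ≫ v.map hom = y.arr i

instance (v : A ⥤ C) {m : ℕ} (c : ComposableArrows C m) : Category (ChainSlice v c) where
  Hom := ChainSliceHom
  id x := ⟨𝟙 x.pt, fun i => by simp⟩
  comp f g := ⟨f.hom ≫ g.hom, fun i => by
    rw [Functor.map_comp, ← Category.assoc, f.w, g.w]⟩
  id_comp f := by apply ChainSliceHom.ext; simp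
  comp_id f := by apply ChainSliceHom.ext; simp
  assoc f g h := by apply ChainSliceHom.ext; simp

/-- The restriction functor `c\A ⥤ c_m\A` induced by the inclusion of the last vertex
`[0] ⟶ [m]`. -/
def restrictLast (v : A ⥤ C) {m : ℕ} (c : ComposableArrows C m) :
    ChainSlice v c ⥤ ChainSlice v (ComposableArrows.mk₀ (c.obj (Fin.last m))) where
  obj x :=
    { pt := x.pt
      arr := fun _ => x.arr (Fin.last m)
      comm := by
        intro i j hij
        have hi := i.isLt
        have hj := j.isLt
        obtain rfl : i = j := Fin.ext (by omega)
        rw [show (homOfLE hij : i ⟶ i) = 𝟙 i from Subsingleton.elim _ _]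
        simp
        exact Category.id_comp _ }
  map f := ⟨f.hom, fun _ => f.w _⟩
  map_id x := by apply ChainSliceHom.ext; rfl
  map_comp f g := by apply ChainSliceHom.ext; rfl

theorem _root_.CategoryTheory.Functor.ext_of_comp_faithful {D E E' : Type*} [Category D]
    [Category E] [Category E'] {F F' : D ⥤ E} {G : E ⥤ E'} [G.Faithful]
    (hobj : ∀ x, F.obj x = F'.obj x) (hcomp : F ⋙ G = F' ⋙ G) : F = F' :=
  CategoryTheory.Functor.ext hobj fun x y f => G.map_injective <| by
    rw [G.map_comp, G.map_comp, eqToHom_map, eqToHom_map]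
    exact Functor.congr_hom hcomp f

namespace ChainSlice

variable {v : A ⥤ C} {m : ℕ} {c : ComposableArrows C m}

lemma mk_congr_arr {p : A} {a a' : ∀ i, c.obj i ⟶ v.obj p} {h h'} (ha : ∀ i, a i = a' i) :
    (mk p a h : ChainSlice v c) = mk p a' h' := by
  obtain rfl : a = a' := funext ha
  rfl

def forget (v : A ⥤ C) (c : ComposableArrows C m) : ChainSlice v c ⥤ A where
  obj x := x.pt
  map f := f.hom

instance : (forget v c).Faithful where
  map_injective h := ChainSliceHom.ext h

/-- `x.arr 0`, with its source stated as `X`: the type `(mk₀ X).obj 0` of `x.arr 0` only unfolds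
to `X`, which keeps it from composing syntactically with arrows into `X`. -/
def arr₀ {X : C} (x : ChainSlice v (ComposableArrows.mk₀ X)) : X ⟶ v.obj x.pt :=
  x.arr 0

end ChainSlice

def extendLast (v : A ⥤ C) {m : ℕ} (c : ComposableArrows C m) :
    ChainSlice v (ComposableArrows.mk₀ (c.obj (Fin.last m))) ⥤ ChainSlice v c where
  obj x :=
    { pt := x.pt
      arr := fun i => c.map (homOfLE i.le_last) ≫ x.arr₀
      comm := fun i j hij => by rw [← Category.assoc, ← c.map_comp, homOfLE_comp] }
  map f := ⟨f.hom, fun _ => (Category.assoc _ _ _).trans (congrArg _ (f.w 0))⟩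

lemma extendLast_obj_arr_last {v : A ⥤ C} {m : ℕ} {c : ComposableArrows C m}
    (x : ChainSlice v (ComposableArrows.mk₀ (c.obj (Fin.last m)))) :
    ((extendLast v c).obj x).arr (Fin.last m) = x.arr₀ := by
  simp only [extendLast, homOfLE_refl, c.map_id]
  exact Category.id_comp _

/-- for `Cat` with the categorical join, the slice functoriality along the
last-vertex inclusion `[0] ⟶ [m]` is an isomorphism of categories: for any functor
`v : A ⥤ C` and any `m`-simplex `c` of the nerve of `C`, the induced functor
`c\A ⥤ c_m\A` is an isomorphism of categories. -/
theorem restrictLast_isIso (v : A ⥤ C) {m : ℕ} (c : ComposableArrows C m) :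
    ∃ H : ChainSlice v (ComposableArrows.mk₀ (c.obj (Fin.last m))) ⥤ ChainSlice v c,
      restrictLast v c ⋙ H = 𝟭 _ ∧ H ⋙ restrictLast v c = 𝟭 _ := by
  refine ⟨extendLast v c, Functor.ext_of_comp_faithful (G := ChainSlice.forget v _) ?_ rfl,
    Functor.ext_of_comp_faithful (G := ChainSlice.forget v _) ?_ rfl⟩
  · rintro ⟨p, a, h⟩
    exact ChainSlice.mk_congr_arr fun i => h i _ i.le_last
  · rintro ⟨p, a, h⟩
    refine ChainSlice.mk_congr_arr fun i => ?_
    obtain rfl : i = 0 := Subsingleton.elim (α := Fin 1) _ _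
    exact extendLast_obj_arr_last _

end SliceA
end
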